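/- arXiv:2307.02346 — 2 statements merged into one kernel-verified Lean document; each statement's English description precedes it below -/
import Mathlib

section
/- Bailey pair inversion: Let a, q be elements of a field (or formal parameters with |q|<1), and let (α_n), (β_n) be sequences indexed by n ≥ 0. Then β_n = Σ_{j=0}^{n} α_j / ((q;q)_{n-j} (aq;q)_{n+j}) for all n ≥ 0 if and only if α_n = ((1 - a q^{2n})/(1 - a)) Σ_{j=0}^{n} ((a;q)_{n+j}/(q;q)_{n-j}) (-1)^{n-j} q^{binom(n-j,2)} β_j for all n ≥ 0. -/
/-!
Write `M n j = 1 / ((q;q)_{n-j} (aq;q)_{n+j})` and `N n j` for the coefficient of `β j` in the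
formula for `α n`. Both are lower triangular, and `M` has nonzero diagonal, so the theorem
reduces to the orthogonality `∑_{j=k}^{n} M n j N j k = δ_{nk}`: then `M N = 1` on sequences,
and `M` is injective. With `c = a q^{2k}` and `n = k + m`, the `j = k + i` term of that sum is
`(-1)^i q^{binom(i,2)} (1 - c q^{2i}) / ((q;q)_i (q;q)_{m-i} (cq^i;q)_{m+1})`. For `m ≥ 1` these
terms sum to zero because they telescope: they are the differences of an explicit
hypergeometric antiderivative (a Gosper certificate).
-/

/-- The q-Pochhammer symbol `(x;q)_k = ∏_{i=0}^{k-1} (1 - x q^i)`. -/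
noncomputable def qp (q x : ℂ) (k : ℕ) : ℂ := ∏ i ∈ Finset.range k, (1 - x * q ^ i)

open Finset

section LowerTriangular

variable {R : Type*}

theorem sum_range_mul_sum_range_eq_self [Semiring R] {P Q : ℕ → ℕ → R}
    (hPQ : ∀ k n, k ≤ n → ∑ j ∈ Icc k n, P n j * Q j k = if n = k then 1 else 0)
    (γ : ℕ → R) (n : ℕ) :
    ∑ j ∈ range (n + 1), P n j * ∑ k ∈ range (j + 1), Q j k * γ k = γ n := by
  calc ∑ j ∈ range (n + 1), P n j * ∑ k ∈ range (j + 1), Q j k * γ k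
      = ∑ k ∈ range (n + 1), (∑ j ∈ Icc k n, P n j * Q j k) * γ k := by
        simp only [mul_sum, sum_mul, mul_assoc]
        refine sum_comm' fun j k => ?_
        simp only [mem_range, mem_Icc]
        omega
    _ = ∑ k ∈ range (n + 1), (if n = k then γ k else 0) := by
        refine sum_congr rfl fun k hk => ?_
        rw [hPQ k n (by simpa [Nat.lt_succ_iff] using hk), ite_mul, one_mul, zero_mul]
    _ = γ n := by simp

theorem eq_of_forall_sum_range_mul_eq [Ring R] [NoZeroDivisors R] {K : ℕ → ℕ → R}
    (hK : ∀ n, K n n ≠ 0) {γ δ : ℕ → R}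
    (h : ∀ n, ∑ j ∈ range (n + 1), K n j * γ j = ∑ j ∈ range (n + 1), K n j * δ j) :
    γ = δ := by
  funext n
  induction n using Nat.strong_induction_on with
  | _ n ih =>
    have hn := h n
    rw [sum_range_succ, sum_range_succ, sum_congr rfl fun j hj => by rw [ih j (mem_range.1 hj)]]
      at hn
    exact mul_left_cancel₀ (hK n) (add_left_cancel hn)

theorem triangular_inversion [Ring R] [NoZeroDivisors R] {P Q : ℕ → ℕ → R}
    (hPQ : ∀ k n, k ≤ n → ∑ j ∈ Icc k n, P n j * Q j k = if n = k then 1 else 0)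
    (hP : ∀ n, P n n ≠ 0) (α β : ℕ → R) :
    (∀ n, β n = ∑ j ∈ range (n + 1), P n j * α j) ↔
      ∀ n, α n = ∑ j ∈ range (n + 1), Q n j * β j := by
  constructor
  · intro hβ
    have hα := eq_of_forall_sum_range_mul_eq (γ := α)
      (δ := fun n => ∑ j ∈ range (n + 1), Q n j * β j) hP fun n => by
        rw [← hβ, sum_range_mul_sum_range_eq_self hPQ]
    exact congrFun hα
  · intro hα n
    simp only [hα]
    exact (sum_range_mul_sum_range_eq_self hPQ β n).symm

end LowerTriangular

section QPochhammer

variable (q x : ℂ)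

theorem qp_zero : qp q x 0 = 1 := prod_range_zero _

theorem qp_succ (k : ℕ) : qp q x (k + 1) = qp q x k * (1 - x * q ^ k) := prod_range_succ _ _

theorem qp_add (m n : ℕ) : qp q x (m + n) = qp q x m * qp q (x * q ^ m) n := by
  simp only [qp, prod_range_add, pow_add, mul_assoc]

theorem qp_succ' (k : ℕ) : qp q x (k + 1) = (1 - x) * qp q (x * q) k := by
  rw [add_comm, qp_add, pow_one, qp, prod_range_one, pow_zero, mul_one]

variable {q x}

theorem qp_ne_zero (h : ∀ i, x * q ^ i ≠ 1) (k : ℕ) : qp q x k ≠ 0 :=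
  prod_ne_zero_iff.mpr fun i _ => sub_ne_zero.mpr (h i).symm

theorem qp_self_ne_zero (hq : ∀ k, 1 ≤ k → q ^ k ≠ 1) (k : ℕ) : qp q q k ≠ 0 :=
  qp_ne_zero (fun i => by rw [← pow_succ']; exact hq (i + 1) i.succ_pos) k

theorem qp_mul_pow_ne_zero (hx : ∀ s, x * q ^ s ≠ 1) (s k : ℕ) : qp q (x * q ^ s) k ≠ 0 :=
  qp_ne_zero (fun i => by rw [mul_assoc, ← pow_add]; exact hx _) k

end QPochhammer

noncomputable def orthoSummand (q c : ℂ) (m i : ℕ) : ℂ :=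
  (-1) ^ i * q ^ i.choose 2 * (1 - c * q ^ (2 * i)) /
    (qp q q i * qp q q (m - i) * qp q (c * q ^ i) (m + 1))

noncomputable def orthoPrimitive (q c : ℂ) (m i : ℕ) : ℂ :=
  -((-1) ^ i * q ^ i.choose 2 * (1 - q ^ i)) /
    ((1 - q ^ m) * qp q q i * qp q q (m - i) * qp q (c * q ^ i) m)

section Orthogonality

variable {q c : ℂ}

theorem orthoSummand_eq_sub (hq : ∀ k, 1 ≤ k → q ^ k ≠ 1) (hc : ∀ s, c * q ^ s ≠ 1) {m i : ℕ}
    (hi : i < m) :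
    orthoSummand q c m i = orthoPrimitive q c m (i + 1) - orthoPrimitive q c m i := by
  obtain ⟨j, rfl⟩ : ∃ j, m = i + j + 1 := ⟨m - i - 1, by omega⟩
  have h1 : ∀ k, (1 : ℂ) - q ^ (k + 1) ≠ 0 := fun k => sub_ne_zero.mpr (hq _ k.succ_pos).symm
  have h2 : ∀ s, (1 : ℂ) - c * q ^ s ≠ 0 := fun s => sub_ne_zero.mpr (hc s).symm
  have hQ := qp_self_ne_zero hq
  set X := qp q (c * q ^ (i + 1)) (i + j)
  have e1 : qp q (c * q ^ i) (i + j + 1) = (1 - c * q ^ i) * X := by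
    rw [qp_succ', mul_assoc, ← pow_succ]
  have e2 : qp q (c * q ^ (i + 1)) (i + j + 1) = X * (1 - c * q ^ (2 * i + j + 1)) := by
    rw [qp_succ, mul_assoc, ← pow_add, show i + 1 + (i + j) = 2 * i + j + 1 by ring]
  have e3 : qp q (c * q ^ i) (i + j + 1 + 1) =
      (1 - c * q ^ i) * X * (1 - c * q ^ (2 * i + j + 1)) := by
    rw [qp_succ', mul_assoc, ← pow_succ, e2, mul_assoc]
  rw [orthoSummand, orthoPrimitive, orthoPrimitive, Nat.choose_succ_succ', Nat.choose_one_right,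
    show i + j + 1 - i = j + 1 by omega, show i + j + 1 - (i + 1) = j by omega,
    qp_succ q q i, qp_succ q q j, e1, e2, e3, ← pow_succ', ← pow_succ']
  -- with `x = q^i`, `y = q^(j+1)` what is left is
  -- `(1 - c x²)(1 - x y) = x (1 - y)(1 - c x) + (1 - x)(1 - c x² y)`
  field_simp [h1 i, h1 j, h1 (i + j), h2 i, h2 (2 * i + j + 1), hQ i, hQ j]
  ring

theorem orthoSummand_self (hq : ∀ k, 1 ≤ k → q ^ k ≠ 1) (hc : ∀ s, c * q ^ s ≠ 1) {m : ℕ}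
    (hm : 1 ≤ m) : orthoSummand q c m m = -orthoPrimitive q c m m := by
  have hqm : (1 : ℂ) - q ^ m ≠ 0 := sub_ne_zero.mpr (hq m hm).symm
  have hc2 : (1 : ℂ) - c * q ^ (2 * m) ≠ 0 := sub_ne_zero.mpr (hc _).symm
  rw [orthoSummand, orthoPrimitive, Nat.sub_self, qp_succ, qp_zero, mul_assoc c, ← pow_add,
    ← two_mul]
  field_simp [qp_self_ne_zero hq m, qp_mul_pow_ne_zero hc m m, hqm, hc2]

theorem sum_orthoSummand (hq : ∀ k, 1 ≤ k → q ^ k ≠ 1) (hc : ∀ s, c * q ^ s ≠ 1) (m : ℕ) :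
    ∑ i ∈ range (m + 1), orthoSummand q c m i = if m = 0 then 1 else 0 := by
  rcases Nat.eq_zero_or_pos m with rfl | hm
  · have : (1 : ℂ) - c ≠ 0 := sub_ne_zero.mpr (by simpa using (hc 0).symm)
    simp [orthoSummand, qp, this]
  · have hsum : ∑ i ∈ range m, orthoSummand q c m i =
        orthoPrimitive q c m m - orthoPrimitive q c m 0 := by
      rw [← sum_range_sub]
      exact sum_congr rfl fun i hi => orthoSummand_eq_sub hq hc (mem_range.1 hi)
    rw [sum_range_succ, hsum, orthoSummand_self hq hc hm, if_neg hm.ne']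
    simp [orthoPrimitive]

end Orthogonality

noncomputable def baileyKernel (q a : ℂ) (n j : ℕ) : ℂ :=
  (qp q q (n - j) * qp q (a * q) (n + j))⁻¹

noncomputable def baileyInverseKernel (q a : ℂ) (n j : ℕ) : ℂ :=
  (1 - a * q ^ (2 * n)) / (1 - a) *
    (qp q a (n + j) / qp q q (n - j) * (-1) ^ (n - j) * q ^ ((n - j) * (n - j - 1) / 2))

section BaileyKernel

variable {q a : ℂ}

theorem baileyKernel_mul_baileyInverseKernel (hq : ∀ k, 1 ≤ k → q ^ k ≠ 1)
    (ha : ∀ k, a * q ^ k ≠ 1) (k : ℕ) {m i : ℕ} (hi : i ≤ m) :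
    baileyKernel q a (k + m) (k + i) * baileyInverseKernel q a (k + i) k =
      orthoSummand q (a * q ^ (2 * k)) m i := by
  have hshift : (1 - a) * qp q (a * q) (2 * k + i + m) =
      qp q a (2 * k + i) * qp q (a * q ^ (2 * k) * q ^ i) (m + 1) := by
    rw [← qp_succ', add_assoc, qp_add, mul_assoc, ← pow_add]
  have hpre : (1 : ℂ) - a * q ^ (2 * (k + i)) = 1 - a * q ^ (2 * k) * q ^ (2 * i) := by
    rw [mul_assoc, ← pow_add, mul_add]
  have ha1 : (1 : ℂ) - a ≠ 0 := sub_ne_zero.mpr (by simpa using (ha 0).symm)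
  have haq : qp q (a * q) (2 * k + i + m) ≠ 0 := by
    simpa using qp_mul_pow_ne_zero ha 1 (2 * k + i + m)
  rw [baileyKernel, baileyInverseKernel, orthoSummand, show k + m - (k + i) = m - i by omega,
    show k + m + (k + i) = 2 * k + i + m by omega, show k + i - k = i by omega,
    show k + i + k = 2 * k + i by omega, ← Nat.choose_two_right, hpre]
  have hc : qp q (a * q ^ (2 * k) * q ^ i) (m + 1) ≠ 0 := by
    rw [mul_assoc, ← pow_add]; exact qp_mul_pow_ne_zero ha _ _
  field_simp [qp_self_ne_zero hq i, qp_self_ne_zero hq (m - i), ha1, haq, hc]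
  linear_combination -(1 - a * q ^ (2 * k) * q ^ (2 * i)) * q ^ i.choose 2 * hshift

theorem sum_baileyKernel_mul_baileyInverseKernel (hq : ∀ k, 1 ≤ k → q ^ k ≠ 1)
    (ha : ∀ k, a * q ^ k ≠ 1) {k n : ℕ} (hkn : k ≤ n) :
    ∑ j ∈ Icc k n, baileyKernel q a n j * baileyInverseKernel q a j k =
      if n = k then 1 else 0 := by
  obtain ⟨m, rfl⟩ := Nat.exists_eq_add_of_le hkn
  have hc : ∀ s, a * q ^ (2 * k) * q ^ s ≠ 1 := fun s => by rw [mul_assoc, ← pow_add]; exact ha _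
  rw [← Ico_add_one_right_eq_Icc, sum_Ico_eq_sum_range, show k + m + 1 - k = m + 1 by omega,
    sum_congr rfl fun i hi => baileyKernel_mul_baileyInverseKernel hq ha k
      (Nat.lt_succ_iff.mp (mem_range.mp hi)), sum_orthoSummand hq hc]
  simp

theorem baileyKernel_self_ne_zero (hq : ∀ k, 1 ≤ k → q ^ k ≠ 1) (ha : ∀ k, a * q ^ k ≠ 1)
    (n : ℕ) : baileyKernel q a n n ≠ 0 :=
  inv_ne_zero (mul_ne_zero (qp_self_ne_zero hq _) (by simpa using qp_mul_pow_ne_zero ha 1 _))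

end BaileyKernel

/-- Bailey pair inversion: `(α, β)` satisfy the Bailey pair relation relative to `a`
iff `α` is recovered from `β` by the inverse relation. -/
theorem bailey_inversion (q a : ℂ)
    (hq : ∀ k : ℕ, 1 ≤ k → q ^ k ≠ 1) (ha : ∀ k : ℕ, a * q ^ k ≠ 1)
    (α β : ℕ → ℂ) :
    (∀ n, β n = ∑ j ∈ Finset.range (n + 1),
        α j / (qp q q (n - j) * qp q (a * q) (n + j)))
      ↔
    (∀ n, α n = (1 - a * q ^ (2 * n)) / (1 - a) *
      ∑ j ∈ Finset.range (n + 1),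
        qp q a (n + j) / qp q q (n - j) * (-1) ^ (n - j) *
          q ^ ((n - j) * (n - j - 1) / 2) * β j) := by
  simpa only [baileyKernel, baileyInverseKernel, div_eq_inv_mul (α _), mul_sum, mul_assoc] using
    triangular_inversion (fun k n => sum_baileyKernel_mul_baileyInverseKernel hq ha)
    (baileyKernel_self_ne_zero hq ha) α β
end

section
/- Top-degree coefficient of f_{N,j,n} at b_1 = … = b_N = b: With f_{N,j,n} as defined via elementary symmetric polynomials, the limit as b → ∞ of f_{N,j,n}(b,…,b)/(1−b)^N equals q^{(N−j)(n−j)} [N choose j]_q for all integers j, n and N ≥ 0. Equivalently, the coefficient of (−b)^N in f_{N,j,n}(b,…,b) viewed as a polynomial in b is q^{(N−j)(n−j)} [N choose j]_q. -/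
/-- The Gaussian binomial coefficient `[N choose k]_q`, zero outside `0 ≤ k ≤ N`. -/
noncomputable def qbin (q : ℂ) (N k : ℤ) : ℂ :=
  if 0 ≤ k ∧ k ≤ N then qp q q N.toNat / (qp q q k.toNat * qp q q (N - k).toNat) else 0

/-- The M-th elementary symmetric polynomial in the variables `b 0, …, b (N-1)`. -/
noncomputable def esym (N M : ℕ) (b : ℕ → ℂ) : ℂ :=
  ∑ t ∈ (Finset.range N).powersetCard M, ∏ i ∈ t, b i

/-- The polynomial `f_{N,j,n}(b_1,…,b_N)`. -/
noncomputable def fpoly (a q : ℂ) (N : ℕ) (j n : ℤ) (b : ℕ → ℂ) : ℂ :=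
  ∑ M ∈ Finset.range (N + 1), ∑ u ∈ Finset.Icc (0 : ℤ) (N : ℤ),
    a ^ u * q ^ (((M : ℤ) - j + u) * (n - j + u) + u * (n - (N : ℤ))) *
      qbin q M (j - u) * qbin q ((N : ℤ) - M) u * (-1) ^ M * esym N M b

/-!
Substituting `ε = (1 - b)⁻¹`, so that `b ε = ε - 1`, turns `p(b) / (1 - b)^N` for a polynomial `p`
of degree at most `N` into the polynomial `∑ c_M (ε - 1)^M ε^(N - M)` in `ε`; as `b → ∞` we have
`ε → 0`, and only the term `M = N` survives. For `f_{N,j,n}(b,…,b)` that term is the one with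
`[0 choose u]_q`, which forces `u = 0`.
-/

open Filter Finset Bornology Topology

theorem tendsto_sum_mul_pow_div_one_sub_pow {𝕜 : Type*} [NormedField 𝕜] (c : ℕ → 𝕜) (N : ℕ) :
    Tendsto (fun b : 𝕜 => (∑ M ∈ range (N + 1), c M * b ^ M) / (1 - b) ^ N) (cobounded 𝕜)
      (𝓝 ((-1) ^ N * c N)) := by
  set g : 𝕜 → 𝕜 := fun ε => ∑ M ∈ range (N + 1), c M * ((ε - 1) ^ M * ε ^ (N - M))
  have hg : Continuous g := by fun_prop
  have hg0 : g 0 = (-1) ^ N * c N := by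
    simp only [g]
    rw [sum_eq_single_of_mem N (self_mem_range_succ N)]
    · simp [mul_comm]
    · intro M hM hMN
      have hMlt : M < N := lt_of_le_of_ne (Nat.lt_succ_iff.mp (mem_range.mp hM)) hMN
      simp [zero_pow (Nat.sub_ne_zero_of_lt hMlt)]
  have hε : Tendsto (fun b : 𝕜 => (1 - b)⁻¹) (cobounded 𝕜) (𝓝 0) :=
    tendsto_inv₀_cobounded.comp (tendsto_const_sub_cobounded 1)
  refine hg0 ▸ ((hg.tendsto 0).comp hε).congr' ?_
  filter_upwards [eventually_ne_cobounded 1] with b hb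
  have hne : 1 - b ≠ 0 := sub_ne_zero.mpr hb.symm
  simp only [Function.comp_apply, g, sum_div]
  refine sum_congr rfl fun M hM => ?_
  have hMN : M + (N - M) = N := Nat.add_sub_cancel' (Nat.lt_succ_iff.mp (mem_range.mp hM))
  have hbε : (1 - b)⁻¹ - 1 = b * (1 - b)⁻¹ := by field_simp; ring
  rw [hbε, mul_pow, mul_assoc, ← pow_add, hMN, inv_pow, div_eq_mul_inv, mul_assoc]

theorem esym_const (N M : ℕ) (b : ℂ) : esym N M (fun _ => b) = N.choose M * b ^ M := by
  rw [esym, sum_congr rfl fun t ht => by rw [prod_const, (mem_powersetCard.mp ht).2], sum_const,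
    card_powersetCard, card_range, nsmul_eq_mul]

theorem qbin_zero_left (q : ℂ) (u : ℤ) : qbin q 0 u = if u = 0 then 1 else 0 := by
  by_cases hu : u = 0
  · simp [hu, qbin, qp]
  · simp only [qbin, if_neg hu]
    exact if_neg fun h => hu (le_antisymm h.2 h.1)

/-- The coefficient of `b ^ M` in `f_{N,j,n}(b,…,b)`. -/
noncomputable def fpolyDiagCoeff (a q : ℂ) (N : ℕ) (j n : ℤ) (M : ℕ) : ℂ :=
  (∑ u ∈ Icc (0 : ℤ) N, a ^ u * q ^ (((M : ℤ) - j + u) * (n - j + u) + u * (n - (N : ℤ))) *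
      qbin q M (j - u) * qbin q ((N : ℤ) - M) u) * (-1) ^ M * N.choose M

theorem fpoly_const (a q : ℂ) (N : ℕ) (j n : ℤ) (b : ℂ) :
    fpoly a q N j n (fun _ => b) = ∑ M ∈ range (N + 1), fpolyDiagCoeff a q N j n M * b ^ M := by
  refine sum_congr rfl fun M _ => ?_
  simp only [fpolyDiagCoeff, esym_const, sum_mul]
  refine sum_congr rfl fun u _ => ?_
  ring

theorem fpolyDiagCoeff_self (a q : ℂ) (N : ℕ) (j n : ℤ) :
    fpolyDiagCoeff a q N j n N = (-1) ^ N * (q ^ (((N : ℤ) - j) * (n - j)) * qbin q N j) := by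
  simp only [fpolyDiagCoeff, sub_self, qbin_zero_left, mul_ite, mul_one, mul_zero,
    sum_ite_eq', mem_Icc, le_refl, Int.natCast_nonneg, and_self, if_true, Nat.choose_self,
    sub_zero, add_zero, zero_mul, zpow_zero, Nat.cast_one]
  ring

theorem fpoly_top_coeff_general (a q : ℂ) (N : ℕ) (j n : ℤ) :
    Filter.Tendsto
      (fun b : ℝ => fpoly a q N j n (fun _ => (b : ℂ)) / (1 - (b : ℂ)) ^ N)
      Filter.atTop
      (nhds (q ^ (((N : ℤ) - j) * (n - j)) * qbin q N j)) := by
  have h := (tendsto_sum_mul_pow_div_one_sub_pow (fpolyDiagCoeff a q N j n) N).comp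
    (RCLike.tendsto_ofReal_atTop_cobounded ℂ)
  rw [fpolyDiagCoeff_self, ← mul_assoc, ← mul_pow, neg_one_mul, neg_neg, one_pow, one_mul] at h
  simpa only [Function.comp_def, fpoly_const, RCLike.ofReal_eq_complex_ofReal] using h

/-- Top-degree coefficient of `f_{N,j,n}` at `b_1 = … = b_N = b`:
`lim_{b → ∞} f_{N,j,n}(b,…,b)/(1-b)^N = q^{(N-j)(n-j)} [N choose j]_q`. -/
theorem fpoly_top_coeff (a q : ℂ) (hq : q ≠ 0) (N : ℕ) (j n : ℤ) :
    Filter.Tendsto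
      (fun b : ℝ => fpoly a q N j n (fun _ => (b : ℂ)) / (1 - (b : ℂ)) ^ N)
      Filter.atTop
      (nhds (q ^ (((N : ℤ) - j) * (n - j)) * qbin q N j)) :=
  fpoly_top_coeff_general a q N j n
end
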